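/- arXiv:2208.13522 — 5 statements merged into one kernel-verified Lean document; each statement's English description precedes it below -/
import Mathlib

section
/- Let λ ∈ ℝ^m with λ ≥ 0 and let ū^λ ∈ U_ad be a minimizer of u ↦ J(u) + ⟨λ, Θ(u)⟩ over U_ad. Then for every b ∈ B^λ, the optimal value of the constrained problem with level b is attained at ū^λ and equals J(ū^λ), i.e., J(ū^λ) = inf { J(u) : u ∈ U_ad, Θ(u) ≤ b componentwise }. -/
open scoped BigOperators

/-- **Everett's theorem (extension), optimal-value part.**
If `ū` minimizes the Lagrangian `u ↦ J u + ⟨λ, Θ u⟩` over `U_ad` for a nonnegative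
multiplier `λ`, then for every level `b ∈ B^λ`, the optimal value of the constrained
problem with level `b` is attained at `ū` and equals `J ū`. -/
theorem everett_value {𝕌 : Type*} {m : ℕ} (Uad : Set 𝕌) (hUad : Uad.Nonempty)
    (J : 𝕌 → ℝ) (Θ : 𝕌 → Fin m → ℝ)
    (lam : Fin m → ℝ) (hlam : ∀ i, 0 ≤ lam i)
    (ubar : 𝕌) (hubar : ubar ∈ Uad)
    (hmin : ∀ u ∈ Uad, J ubar + ∑ i, lam i * Θ ubar i ≤ J u + ∑ i, lam i * Θ u i)
    (b : Fin m → ℝ)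
    (hb : ∀ i, (0 < lam i → b i = Θ ubar i) ∧ (lam i = 0 → Θ ubar i ≤ b i)) :
    ubar ∈ Uad ∧ (∀ i, Θ ubar i ≤ b i) ∧
      J ubar = sInf (J '' {u | u ∈ Uad ∧ ∀ i, Θ u i ≤ b i}) := by
  have hfeas : ∀ i, Θ ubar i ≤ b i := by
    intro i
    rcases (hlam i).lt_or_eq with h | h
    · exact le_of_eq ((hb i).1 h).symm
    · exact (hb i).2 h.symm
  have hkey : ∀ i, lam i * b i = lam i * Θ ubar i := by
    intro i
    rcases (hlam i).lt_or_eq with h | h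
    · rw [(hb i).1 h]
    · rw [← h]; ring
  have hlb : ∀ u ∈ Uad, (∀ i, Θ u i ≤ b i) → J ubar ≤ J u := by
    intro u hu hΘ
    have h1 := hmin u hu
    have h2 : ∑ i, lam i * Θ u i ≤ ∑ i, lam i * Θ ubar i := by
      calc ∑ i, lam i * Θ u i ≤ ∑ i, lam i * b i :=
            Finset.sum_le_sum fun i _ => mul_le_mul_of_nonneg_left (hΘ i) (hlam i)
        _ = ∑ i, lam i * Θ ubar i := Finset.sum_congr rfl fun i _ => hkey i
    linarith
  refine ⟨hubar, hfeas, ?_⟩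
  have hmem : J ubar ∈ J '' {u | u ∈ Uad ∧ ∀ i, Θ u i ≤ b i} :=
    ⟨ubar, ⟨hubar, hfeas⟩, rfl⟩
  refine le_antisymm ?_ (csInf_le ⟨J ubar, ?_⟩ hmem)
  · apply le_csInf ⟨_, hmem⟩
    rintro x ⟨u, ⟨hu, hΘ⟩, rfl⟩
    exact hlb u hu hΘ
  · rintro x ⟨u, ⟨hu, hΘ⟩, rfl⟩
    exact hlb u hu hΘ
end

section
/- The value inf E[φ(Y, U, V, W'')], where the infimum is over all random variables U : Ω → 𝕌 with σ(U) ⊆ σ(W') and all integrable random variables V : Ω → ℝ^m with σ(V) ⊆ σ(W', W'') and E[V | σ(W')] = 0 almost surely, equals E[ψ(Y)]. -/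
/-!
As `W'` takes finitely many values, `σ(W')` is finite and `Ω` is partitioned into finitely many
`σ(W')`-atoms. A `σ(W')`-measurable map sends an atom into one measurable atom of its target, on
which the measurable `φ` is constant, so on an atom `A` the maps `Y` and `U` may be frozen at a
point `ω₀ ∈ A`; and a `σ(W', W'')`-measurable `V` agrees on `A` with a `σ(W'')`-measurable `V_A`.
By independence, `∫_A V = μ(A) • E[V_A]` and `∫⁻_A φ(Y, U, V, W'') = μ(A) * E[φ(Y ω₀, U ω₀, V_A,
W'')]`, so on an atom of positive mass the constraint `E[V | σ(W')] = 0` reads `E[V_A] = 0` and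
the problem becomes the pointwise problem at `Y ω₀`. Summing over the atoms gives `≥`; pasting
`ε`-optimal pointwise choices over the atoms gives `≤`.
-/

open MeasureTheory ProbabilityTheory Set
open scoped ENNReal

local notation "σ(" X ")" => MeasurableSpace.comap X inferInstance

section MeasurableAtom

variable {α β : Type*} [mα : MeasurableSpace α] [MeasurableSpace β]

lemma Measurable.mem_measurableAtom {f : α → β} (hf : Measurable f) {x y : α}
    (h : x ∈ measurableAtom y) : f x ∈ measurableAtom (f y) := by
  simp only [measurableAtom, mem_iInter]
  exact fun s hs hms => mem_of_mem_measurableAtom h (hf hms) hs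

lemma Measurable.eq_of_mem_measurableAtom [MeasurableSingletonClass β] {f : α → β}
    (hf : Measurable f) {x y : α} (h : x ∈ measurableAtom y) : f x = f y := by
  simpa using hf.mem_measurableAtom h

lemma MeasurableSet.measurableAtom_of_finite (h : {s : Set α | MeasurableSet s}.Finite)
    (x : α) : MeasurableSet (measurableAtom x) := by
  have : measurableAtom x = ⋂ s ∈ {s | MeasurableSet s ∧ x ∈ s}, s := by
    ext y
    simp only [measurableAtom, mem_iInter, mem_ofPred_eq, and_imp]
    exact forall_congr' fun _ => imp.swap
  rw [this]
  exact .biInter (h.subset fun s hs => hs.1).countable fun s hs => hs.1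

lemma MeasurableSpace.finite_setOf_measurableSet_comap {γ : Type*} {f : γ → α}
    (hf : (range f).Finite) : {s | MeasurableSet[mα.comap f] s}.Finite := by
  refine (hf.powerset.image (f ⁻¹' ·)).subset ?_
  rintro _ ⟨t, -, rfl⟩
  exact ⟨t ∩ range f, inter_subset_right, by simp⟩

variable [Nonempty α]

noncomputable def atomRep (x : α) : α := Classical.epsilon (· ∈ measurableAtom x)

lemma atomRep_mem_measurableAtom (x : α) : atomRep x ∈ measurableAtom x :=
  Classical.epsilon_spec ⟨x, mem_measurableAtom_self x⟩

lemma atomRep_eq_of_mem {x y : α} (h : y ∈ measurableAtom x) : atomRep y = atomRep x := by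
  rw [atomRep, atomRep, measurableAtom_eq_of_mem h]

lemma mem_measurableAtom_atomRep (x : α) : x ∈ measurableAtom (atomRep x) := by
  rw [measurableAtom_eq_of_mem (atomRep_mem_measurableAtom x)]
  exact mem_measurableAtom_self x

lemma atomRep_atomRep (x : α) : atomRep (atomRep x) = atomRep x :=
  atomRep_eq_of_mem (atomRep_mem_measurableAtom x)

lemma preimage_atomRep_singleton_atomRep (x : α) :
    atomRep ⁻¹' {atomRep x} = measurableAtom x := by
  ext y
  refine ⟨fun h => ?_, atomRep_eq_of_mem⟩
  have hy := mem_measurableAtom_atomRep y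
  rwa [mem_singleton_iff.mp h, measurableAtom_eq_of_mem (atomRep_mem_measurableAtom x)] at hy

lemma finite_range_atomRep (h : {s : Set α | MeasurableSet s}.Finite) :
    (range (atomRep : α → α)).Finite := by
  refine (h.image fun s => Classical.epsilon (· ∈ s)).subset ?_
  rintro _ ⟨x, rfl⟩
  exact ⟨_, MeasurableSet.measurableAtom_of_finite h x, rfl⟩

lemma measurableSet_preimage_atomRep (h : {s : Set α | MeasurableSet s}.Finite) (z : α) :
    MeasurableSet (atomRep ⁻¹' {z}) := by
  by_cases hz : z ∈ range atomRep
  · obtain ⟨x, rfl⟩ := hz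
    rw [preimage_atomRep_singleton_atomRep]
    exact .measurableAtom_of_finite h x
  · rw [preimage_singleton_eq_empty.mpr hz]
    exact .empty

end MeasurableAtom

section ComapAtom

variable {Ω β γ : Type*} [MeasurableSpace β] [MeasurableSpace γ]

lemma mem_measurableAtom_of_comap_le {f : Ω → β} {X : Ω → γ} (h : σ(f) ≤ σ(X)) {ω ω₀ : Ω}
    (hω : X ω ∈ measurableAtom (X ω₀)) : f ω ∈ measurableAtom (f ω₀) := by
  simp only [measurableAtom, mem_iInter]
  intro B hB hmB
  obtain ⟨C, hC, hCB⟩ := h _ ⟨B, hmB, rfl⟩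
  have hω₀ : ω₀ ∈ X ⁻¹' C := hCB ▸ hB
  show ω ∈ f ⁻¹' B
  rw [← hCB]
  exact mem_of_mem_measurableAtom hω hC hω₀

lemma mem_measurableAtom_of_mem_preimage_atomRep [Nonempty Ω] {X : Ω → β} {ω z : Ω}
    (h : ω ∈ atomRep (mα := σ(X)) ⁻¹' {z}) : X ω ∈ measurableAtom (X z) := by
  rw [mem_preimage, mem_singleton_iff] at h
  subst h
  exact Measurable.mem_measurableAtom (mα := σ(X)) (comap_measurable X)
    (mem_measurableAtom_atomRep (mα := σ(X)) ω)

lemma exists_measurable_comap_eq_of_mem_measurableAtom {E : Type*} [MeasurableSpace E]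
    [StandardBorelSpace E] [Nonempty E] {X : Ω → β} {Z : Ω → γ} {V : Ω → E}
    (hV : Measurable[σ(fun ω => (X ω, Z ω))] V) (ω₀ : Ω) :
    ∃ V₀ : Ω → E, Measurable[σ(Z)] V₀ ∧ ∀ ω, X ω ∈ measurableAtom (X ω₀) → V ω = V₀ ω := by
  obtain ⟨g, hg, rfl⟩ := hV.exists_eq_measurable_comp
  refine ⟨fun ω => g (X ω₀, Z ω), (hg.comp measurable_prodMk_left).comp (comap_measurable Z),
    fun ω hω => ?_⟩
  exact (hg.comp measurable_prodMk_right).eq_of_mem_measurableAtom hω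

end ComapAtom

section Fibers

variable {α β γ : Type*} {r : α → β}

lemma fiberwise_eq_sum_indicator [AddCommMonoid γ] (hr : (range r).Finite) (G : β → α → γ) :
    (fun x => G (r x) x) = ∑ z ∈ hr.toFinset, (r ⁻¹' {z}).indicator (G z) := by
  ext x
  rw [Finset.sum_apply, Finset.sum_eq_single_of_mem (r x) (by simp)]
  · simp
  · intro z _ hz
    simp [Ne.symm hz]

variable [mα : MeasurableSpace α]

lemma measurable_fiberwise [MeasurableSpace γ] (hr : (range r).Finite)
    (hfib : ∀ z, MeasurableSet (r ⁻¹' {z})) {G : β → α → γ} (hG : ∀ z, Measurable (G z)) :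
    Measurable fun x => G (r x) x := by
  intro B hB
  have : (fun x => G (r x) x) ⁻¹' B = ⋃ z ∈ range r, r ⁻¹' {z} ∩ G z ⁻¹' B := by
    ext x
    simp only [mem_preimage, mem_iUnion, mem_inter_iff, mem_singleton_iff, mem_range,
      exists_prop, exists_exists_eq_and]
    exact ⟨fun h => ⟨x, rfl, h⟩, fun ⟨y, hy, h⟩ => hy ▸ h⟩
  rw [this]
  exact .biUnion hr.countable fun z _ => (hfib z).inter (hG z hB)

lemma lintegral_eq_sum_setLIntegral_fiber {μ : Measure α} (hr : (range r).Finite)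
    (hfib : ∀ z, MeasurableSet (r ⁻¹' {z})) (f : α → ℝ≥0∞) :
    ∫⁻ x, f x ∂μ = ∑ z ∈ hr.toFinset, ∫⁻ x in r ⁻¹' {z}, f x ∂μ := by
  have hcover : ⋃ z ∈ hr.toFinset, r ⁻¹' {z} = univ := by
    ext x
    simp
  rw [← lintegral_biUnion_finset (pairwiseDisjoint_fiber r _) (fun z _ => hfib z), hcover,
    Measure.restrict_univ]

end Fibers

section Independence

variable {Ω β E : Type*} {m₁ m₂ : MeasurableSpace Ω} {mΩ : MeasurableSpace Ω} {μ : Measure Ω}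
  {A : Set Ω}

lemma ProbabilityTheory.Indep.setLIntegral_eq_mul (hm₁ : m₁ ≤ mΩ) (hm₂ : m₂ ≤ mΩ)
    (hind : Indep m₁ m₂ μ) (hA : MeasurableSet[m₁] A) {f : Ω → ℝ≥0∞} (hf : Measurable[m₂] f) :
    ∫⁻ ω in A, f ω ∂μ = μ A * ∫⁻ ω, f ω ∂μ := by
  rw [← lintegral_indicator (hm₁ A hA), ← one_mul (μ A), ← lintegral_indicator_const (hm₁ A hA),
    ← lintegral_mul_eq_lintegral_mul_lintegral_of_independent_measurableSpace hm₁ hm₂ hind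
      (Measurable.indicator (m := m₁) measurable_const hA) hf]
  congr with ω
  by_cases hω : ω ∈ A <;> simp [hω]

variable [NormedAddCommGroup E] [MeasurableSpace E] [BorelSpace E] [SecondCountableTopology E]

lemma ProbabilityTheory.Indep.integrable_of_integrableOn (hm₁ : m₁ ≤ mΩ) (hm₂ : m₂ ≤ mΩ)
    (hind : Indep m₁ m₂ μ) (hA : MeasurableSet[m₁] A) (hμA : μ A ≠ 0) {f : Ω → E}
    (hf : Measurable[m₂] f) (hfA : IntegrableOn f A μ) : Integrable f μ := by
  refine ⟨(hf.mono hm₂ le_rfl).aestronglyMeasurable, ?_⟩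
  have hfin : ∫⁻ ω in A, ‖f ω‖ₑ ∂μ < ∞ := hfA.2
  show ∫⁻ ω, ‖f ω‖ₑ ∂μ < ∞
  rw [hind.setLIntegral_eq_mul hm₁ hm₂ hA (f := fun ω => ‖f ω‖ₑ) (measurable_enorm.comp hf)]
    at hfin
  exact ENNReal.lt_top_of_mul_ne_top_right hfin.ne hμA

variable [NormedSpace ℝ E] [CompleteSpace E] [IsFiniteMeasure μ]

lemma condExp_fiberwise_eq_zero (hm₁ : m₁ ≤ mΩ) (hm₂ : m₂ ≤ mΩ) (hind : Indep m₂ m₁ μ)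
    {r : Ω → β} (hr : (range r).Finite) (hfib : ∀ z, MeasurableSet[m₁] (r ⁻¹' {z}))
    {G : β → Ω → E} (hG : ∀ z, Measurable[m₂] (G z)) (hGi : ∀ z, Integrable (G z) μ)
    (hG0 : ∀ z, ∫ ω, G z ω ∂μ = 0) :
    μ[fun ω => G (r ω) ω | m₁] =ᵐ[μ] 0 := by
  have hterm : ∀ z, μ[(r ⁻¹' {z}).indicator (G z) | m₁] =ᵐ[μ] 0 := fun z =>
    (condExp_indicator (hGi z) (hfib z)).trans <|
      (condExp_indep_eq hm₂ hm₁ (hG z).stronglyMeasurable hind).mono fun ω hω => by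
        simp [hω, hG0]
  rw [fiberwise_eq_sum_indicator hr]
  refine (condExp_finsetSum (fun z _ => (hGi z).indicator (hm₁ _ (hfib z))) m₁).trans ?_
  filter_upwards [(Filter.eventually_all_finset hr.toFinset).2 fun z _ => hterm z] with ω hω
  simp [Finset.sum_apply, Finset.sum_eq_zero hω]

end Independence

section Freezing

variable {Ω 𝕐 𝕌 𝕎' 𝕎'' E : Type*} [MeasurableSpace Ω] [MeasurableSpace 𝕐] [MeasurableSpace 𝕌]
  [MeasurableSpace 𝕎'] [MeasurableSpace 𝕎''] [MeasurableSpace E]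
  {μ : Measure Ω} {φ : 𝕐 × 𝕌 × E × 𝕎'' → ℝ≥0∞} {W' : Ω → 𝕎'} {W'' : Ω → 𝕎''} {Y : Ω → 𝕐}

lemma setLIntegral_eq_measure_mul_lintegral (hφ : Measurable φ) (hW' : Measurable W')
    (hW'' : Measurable W'') (hind : Indep σ(W') σ(W'') μ) (hY : σ(Y) ≤ σ(W'))
    {U : Ω → 𝕌} (hU : σ(U) ≤ σ(W')) {V V₀ : Ω → E} (hV₀ : Measurable[σ(W'')] V₀)
    {A : Set Ω} (hA : MeasurableSet[σ(W')] A) {ω₀ : Ω}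
    (hA₀ : ∀ ω ∈ A, W' ω ∈ measurableAtom (W' ω₀)) (hVA : ∀ ω ∈ A, V ω = V₀ ω) :
    ∫⁻ ω in A, φ (Y ω, U ω, V ω, W'' ω) ∂μ =
      μ A * ∫⁻ ω, φ (Y ω₀, U ω₀, V₀ ω, W'' ω) ∂μ := by
  have hYU : σ(fun ω => (Y ω, U ω)) ≤ σ(W') :=
    ((measurable_iff_comap_le.mpr hY).prodMk (measurable_iff_comap_le.mpr hU)).comap_le
  rw [← hind.setLIntegral_eq_mul hW'.comap_le hW''.comap_le hA
    (f := fun ω => φ (Y ω₀, U ω₀, V₀ ω, W'' ω)) (hφ.comp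
    (measurable_const.prodMk (measurable_const.prodMk (hV₀.prodMk (comap_measurable W'')))))]
  refine setLIntegral_congr_fun (hW'.comap_le _ hA) fun ω hω => ?_
  rw [hVA ω hω]
  exact (hφ.comp (measurable_fst.prodMk (measurable_snd.prodMk measurable_const))
    ).eq_of_mem_measurableAtom (mem_measurableAtom_of_comap_le hYU (hA₀ ω hω))

end Freezing

section Interchange

variable {Ω 𝕐 𝕌 𝕎' 𝕎'' E : Type*} [MeasurableSpace Ω] [MeasurableSpace 𝕎'']
  [NormedAddCommGroup E] [NormedSpace ℝ E] [MeasurableSpace E]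
  {μ : Measure Ω} {φ : 𝕐 × 𝕌 × E × 𝕎'' → ℝ≥0∞} {W' : Ω → 𝕎'} {W'' : Ω → 𝕎''} {Y : Ω → 𝕐}

/-- `ψ y` in the interchange lemma. -/
noncomputable def pointwiseValue (μ : Measure Ω) (φ : 𝕐 × 𝕌 × E × 𝕎'' → ℝ≥0∞)
    (W'' : Ω → 𝕎'') (y : 𝕐) : ℝ≥0∞ :=
  ⨅ (u : 𝕌) (V : Ω → E) (_ : σ(V) ≤ σ(W'')) (_ : Integrable V μ) (_ : ∫ ω, V ω ∂μ = 0),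
    ∫⁻ ω, φ (y, u, V ω, W'' ω) ∂μ

lemma pointwiseValue_le (y : 𝕐) (u : 𝕌) {V : Ω → E} (hV : σ(V) ≤ σ(W''))
    (hVi : Integrable V μ) (hV0 : ∫ ω, V ω ∂μ = 0) :
    pointwiseValue μ φ W'' y ≤ ∫⁻ ω, φ (y, u, V ω, W'' ω) ∂μ :=
  iInf_le_of_le u <| iInf_le_of_le V <| iInf_le_of_le hV <| iInf_le_of_le hVi <| iInf_le _ hV0

lemma exists_lintegral_le_pointwiseValue_add [Nonempty 𝕌] {ε : ℝ≥0∞} (hε : ε ≠ 0) (y : 𝕐) :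
    ∃ (u : 𝕌) (V : Ω → E), σ(V) ≤ σ(W'') ∧ Integrable V μ ∧ ∫ ω, V ω ∂μ = 0 ∧
      ∫⁻ ω, φ (y, u, V ω, W'' ω) ∂μ ≤ pointwiseValue μ φ W'' y + ε := by
  by_cases htop : pointwiseValue μ φ W'' y = ∞
  · refine ⟨Classical.arbitrary 𝕌, 0, measurable_iff_comap_le.mp measurable_const,
      integrable_zero _ _ _, integral_zero _ _, by simp [htop]⟩
  have hlt := ENNReal.lt_add_right htop hε
  simp only [pointwiseValue, iInf_lt_iff] at hlt
  obtain ⟨u, V, hV, hVi, hV0, hlt⟩ := hlt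
  exact ⟨u, V, hV, hVi, hV0, hlt.le⟩

variable [MeasurableSpace 𝕐] [MeasurableSpace 𝕌]

lemma pointwiseValue_eq_of_mem_measurableAtom (hφ : Measurable φ) {y y' : 𝕐}
    (h : y ∈ measurableAtom y') : pointwiseValue μ φ W'' y = pointwiseValue μ φ W'' y' := by
  refine iInf_congr fun u => iInf_congr fun V => iInf_congr fun _ => iInf_congr fun _ =>
    iInf_congr fun _ => lintegral_congr fun ω => ?_
  exact (hφ.comp measurable_prodMk_right).eq_of_mem_measurableAtom h

variable [MeasurableSpace 𝕎']

lemma setLIntegral_pointwiseValue_eq (hφ : Measurable φ) (hY : σ(Y) ≤ σ(W')) {A : Set Ω}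
    (hA : MeasurableSet A) {ω₀ : Ω} (hA₀ : ∀ ω ∈ A, W' ω ∈ measurableAtom (W' ω₀)) :
    ∫⁻ ω in A, pointwiseValue μ φ W'' (Y ω) ∂μ = μ A * pointwiseValue μ φ W'' (Y ω₀) := by
  rw [setLIntegral_congr_fun hA fun ω hω => pointwiseValue_eq_of_mem_measurableAtom hφ
    (mem_measurableAtom_of_comap_le hY (hA₀ ω hω)), setLIntegral_const, mul_comm]

lemma setLIntegral_le_setLIntegral_pointwiseValue_add (hφ : Measurable φ) (hW' : Measurable W')
    (hW'' : Measurable W'') (hind : Indep σ(W') σ(W'') μ) (hY : σ(Y) ≤ σ(W'))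
    {U : Ω → 𝕌} (hU : σ(U) ≤ σ(W')) {V V₀ : Ω → E} (hV₀ : Measurable[σ(W'')] V₀)
    {A : Set Ω} (hA : MeasurableSet[σ(W')] A) {ω₀ : Ω}
    (hA₀ : ∀ ω ∈ A, W' ω ∈ measurableAtom (W' ω₀)) (hVA : ∀ ω ∈ A, V ω = V₀ ω) {ε : ℝ≥0∞}
    (hle : ∫⁻ ω, φ (Y ω₀, U ω₀, V₀ ω, W'' ω) ∂μ ≤ pointwiseValue μ φ W'' (Y ω₀) + ε) :
    ∫⁻ ω in A, φ (Y ω, U ω, V ω, W'' ω) ∂μ ≤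
      ∫⁻ ω in A, (pointwiseValue μ φ W'' (Y ω) + ε) ∂μ := by
  rw [setLIntegral_eq_measure_mul_lintegral hφ hW' hW'' hind hY hU hV₀ hA hA₀ hVA,
    lintegral_add_right _ measurable_const, setLIntegral_const,
    setLIntegral_pointwiseValue_eq hφ hY (hW'.comap_le _ hA) hA₀, mul_comm ε, ← mul_add]
  gcongr

variable [CompleteSpace E] [BorelSpace E] [SecondCountableTopology E]

lemma setLIntegral_pointwiseValue_le [IsFiniteMeasure μ] (hφ : Measurable φ)
    (hW' : Measurable W') (hW'' : Measurable W'') (hind : Indep σ(W') σ(W'') μ)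
    (hY : σ(Y) ≤ σ(W')) {U : Ω → 𝕌} (hU : σ(U) ≤ σ(W')) {V : Ω → E}
    (hV : σ(V) ≤ σ(fun ω => (W' ω, W'' ω))) (hVi : Integrable V μ)
    {A : Set Ω} (hA : MeasurableSet[σ(W')] A) {ω₀ : Ω}
    (hA₀ : ∀ ω ∈ A, W' ω ∈ measurableAtom (W' ω₀)) (hVA : ∫ ω in A, V ω ∂μ = 0) :
    ∫⁻ ω in A, pointwiseValue μ φ W'' (Y ω) ∂μ ≤ ∫⁻ ω in A, φ (Y ω, U ω, V ω, W'' ω) ∂μ := by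
  have hA' : MeasurableSet A := hW'.comap_le _ hA
  rcases eq_or_ne (μ A) 0 with hμA | hμA
  · simp [Measure.restrict_eq_zero.mpr hμA]
  obtain ⟨V₀, hV₀, hVV₀⟩ :=
    exists_measurable_comap_eq_of_mem_measurableAtom (measurable_iff_comap_le.mpr hV) ω₀
  have hVAV₀ : ∀ ω ∈ A, V ω = V₀ ω := fun ω hω => hVV₀ ω (hA₀ ω hω)
  have hV₀i : Integrable V₀ μ := hind.integrable_of_integrableOn hW'.comap_le hW''.comap_le hA
    hμA hV₀ (hVi.integrableOn.congr_fun hVAV₀ hA')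
  have hV₀0 : ∫ ω, V₀ ω ∂μ = 0 := by
    have h := (indep_of_indep_of_le_right hind hV₀.comap_le).setIntegral_eq_smul
      hW'.comap_le (f := id) (hV₀.mono hW''.comap_le le_rfl).aemeasurable hA
      measurable_id.aestronglyMeasurable
    simp only [id] at h
    rw [← setIntegral_congr_fun hA' hVAV₀, hVA] at h
    exact (smul_eq_zero.mp h.symm).resolve_left
      ((measureReal_ne_zero_iff (measure_ne_top μ A)).mpr hμA)
  rw [setLIntegral_pointwiseValue_eq hφ hY hA' hA₀,
    setLIntegral_eq_measure_mul_lintegral hφ hW' hW'' hind hY hU hV₀ hA hA₀ hVAV₀]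
  gcongr
  exact pointwiseValue_le _ _ hV₀.comap_le hV₀i hV₀0

lemma fiberwise_admissible [IsFiniteMeasure μ] {β : Type*} (hW' : Measurable W')
    (hW'' : Measurable W'') (hind : Indep σ(W') σ(W'') μ) {r : Ω → β} (hr : (range r).Finite)
    (hfib : ∀ z, MeasurableSet[σ(W')] (r ⁻¹' {z})) (u : β → 𝕌) {V₀ : β → Ω → E}
    (hV₀ : ∀ z, σ(V₀ z) ≤ σ(W'')) (hV₀i : ∀ z, Integrable (V₀ z) μ)
    (hV₀0 : ∀ z, ∫ ω, V₀ z ω ∂μ = 0) :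
    σ(fun ω => u (r ω)) ≤ σ(W') ∧
      σ(fun ω => V₀ (r ω) ω) ≤ σ(fun ω => (W' ω, W'' ω)) ∧
      Integrable (fun ω => V₀ (r ω) ω) μ ∧ μ[fun ω => V₀ (r ω) ω | σ(W')] =ᵐ[μ] 0 := by
  have hW'p : σ(W') ≤ σ(fun ω => (W' ω, W'' ω)) :=
    (comap_measurable (fun ω => (W' ω, W'' ω))).fst.comap_le
  have hW''p : σ(W'') ≤ σ(fun ω => (W' ω, W'' ω)) :=
    (comap_measurable (fun ω => (W' ω, W'' ω))).snd.comap_le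
  have hV₀m : ∀ z, Measurable[σ(W'')] (V₀ z) := fun z => measurable_iff_comap_le.mpr (hV₀ z)
  refine ⟨?_, ?_, ?_, condExp_fiberwise_eq_zero hW'.comap_le hW''.comap_le hind.symm hr hfib
    hV₀m hV₀i hV₀0⟩
  · exact (measurable_fiberwise (mα := σ(W')) hr hfib (G := fun z _ => u z)
      fun _ => measurable_const).comap_le
  · exact (measurable_fiberwise (mα := σ(fun ω => (W' ω, W'' ω))) hr
      (fun z => hW'p _ (hfib z)) fun z => (hV₀m z).mono hW''p le_rfl).comap_le
  · rw [fiberwise_eq_sum_indicator hr]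
    exact integrable_finsetSum' _ fun z _ => (hV₀i z).indicator (hW'.comap_le _ (hfib z))

variable [IsProbabilityMeasure μ]

lemma lintegral_pointwiseValue_le (hφ : Measurable φ) (hW' : Measurable W')
    (hW'' : Measurable W'') (hind : Indep σ(W') σ(W'') μ) (hfin' : (range W').Finite)
    (hY : σ(Y) ≤ σ(W')) {U : Ω → 𝕌} (hU : σ(U) ≤ σ(W')) {V : Ω → E}
    (hV : σ(V) ≤ σ(fun ω => (W' ω, W'' ω))) (hVi : Integrable V μ)
    (hVce : μ[V | σ(W')] =ᵐ[μ] 0) :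
    ∫⁻ ω, pointwiseValue μ φ W'' (Y ω) ∂μ ≤ ∫⁻ ω, φ (Y ω, U ω, V ω, W'' ω) ∂μ := by
  have := nonempty_of_isProbabilityMeasure μ
  have hσ := MeasurableSpace.finite_setOf_measurableSet_comap (mα := inferInstance) hfin'
  have hr := finite_range_atomRep (mα := σ(W')) hσ
  have hfib := measurableSet_preimage_atomRep (mα := σ(W')) hσ
  have hfib' := fun z => hW'.comap_le _ (hfib z)
  rw [lintegral_eq_sum_setLIntegral_fiber hr hfib', lintegral_eq_sum_setLIntegral_fiber hr hfib']
  refine Finset.sum_le_sum fun z _ => setLIntegral_pointwiseValue_le hφ hW' hW'' hind hY hU hV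
    hVi (hfib z) (fun ω => mem_measurableAtom_of_mem_preimage_atomRep) ?_
  rw [← setIntegral_condExp hW'.comap_le hVi (hfib z),
    setIntegral_congr_ae (hfib' z) (hVce.mono fun ω h _ => h)]
  simp

lemma exists_lintegral_le_lintegral_pointwiseValue_add [Nonempty 𝕌] (hφ : Measurable φ)
    (hW' : Measurable W') (hW'' : Measurable W'') (hind : Indep σ(W') σ(W'') μ)
    (hfin' : (range W').Finite) (hY : σ(Y) ≤ σ(W')) {ε : ℝ≥0∞} (hε : ε ≠ 0) :
    ∃ (U : Ω → 𝕌) (V : Ω → E), σ(U) ≤ σ(W') ∧ σ(V) ≤ σ(fun ω => (W' ω, W'' ω)) ∧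
      Integrable V μ ∧ μ[V | σ(W')] =ᵐ[μ] 0 ∧
      ∫⁻ ω, φ (Y ω, U ω, V ω, W'' ω) ∂μ ≤ ∫⁻ ω, pointwiseValue μ φ W'' (Y ω) ∂μ + ε := by
  have := nonempty_of_isProbabilityMeasure μ
  choose u V₀ hV₀ hV₀i hV₀0 hle using
    exists_lintegral_le_pointwiseValue_add (μ := μ) (φ := φ) (W'' := W'') hε
  have hσ := MeasurableSpace.finite_setOf_measurableSet_comap (mα := inferInstance) hfin'
  set r := atomRep (mα := σ(W'))
  have hr : (range r).Finite := finite_range_atomRep (mα := σ(W')) hσ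
  have hfib : ∀ z, MeasurableSet[σ(W')] (r ⁻¹' {z}) :=
    measurableSet_preimage_atomRep (mα := σ(W')) hσ
  have hfib' := fun z => hW'.comap_le _ (hfib z)
  obtain ⟨hU, hV, hVi, hVce⟩ := fiberwise_admissible hW' hW'' hind hr hfib (u ∘ Y)
    (fun z => hV₀ (Y z)) (fun z => hV₀i (Y z)) fun z => hV₀0 (Y z)
  refine ⟨_, _, hU, hV, hVi, hVce, ?_⟩
  have hsum : ∫⁻ ω, pointwiseValue μ φ W'' (Y ω) ∂μ + ε =
      ∑ z ∈ hr.toFinset, ∫⁻ ω in r ⁻¹' {z}, (pointwiseValue μ φ W'' (Y ω) + ε) ∂μ := by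
    rw [← lintegral_eq_sum_setLIntegral_fiber hr hfib', lintegral_add_right _ measurable_const]
    simp
  rw [hsum, lintegral_eq_sum_setLIntegral_fiber hr hfib']
  refine Finset.sum_le_sum fun z hz => ?_
  obtain ⟨x, rfl⟩ := hr.mem_toFinset.mp hz
  refine setLIntegral_le_setLIntegral_pointwiseValue_add hφ hW' hW'' hind hY hU
    (measurable_iff_comap_le.mpr (hV₀ (Y (r x)))) (hfib _)
    (fun ω => mem_measurableAtom_of_mem_preimage_atomRep) (fun ω hω => ?_) ?_
  · rw [mem_preimage, mem_singleton_iff] at hω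
    simp only [hω]
  · simpa only [Function.comp, r, atomRep_atomRep] using hle (Y (r x))

end Interchange

theorem interchange_lemma_general {Ω : Type*} [MeasurableSpace Ω]
    (μ : Measure Ω) [IsProbabilityMeasure μ] {m : ℕ}
    {𝕐 𝕌 𝕎' 𝕎'' : Type*} [MeasurableSpace 𝕐] [MeasurableSpace 𝕌]
    [MeasurableSpace 𝕎'] [MeasurableSpace 𝕎'']
    (φ : 𝕐 × 𝕌 × (Fin m → ℝ) × 𝕎'' → ℝ≥0∞) (hφ : Measurable φ)
    (W' : Ω → 𝕎') (W'' : Ω → 𝕎'')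
    (hW' : Measurable W') (hW'' : Measurable W'')
    (hindep : IndepFun W' W'' μ)
    (hfin' : (Set.range W').Finite)
    (Y : Ω → 𝕐)
    (hY : MeasurableSpace.comap Y inferInstance ≤ MeasurableSpace.comap W' inferInstance)
    (ψ : 𝕐 → ℝ≥0∞)
    (hψ : ∀ y, ψ y =
      ⨅ (u : 𝕌) (V : Ω → Fin m → ℝ)
        (_ : MeasurableSpace.comap V inferInstance ≤ MeasurableSpace.comap W'' inferInstance)
        (_ : Integrable V μ) (_ : ∫ ω, V ω ∂μ = 0),
        ∫⁻ ω, φ (y, u, V ω, W'' ω) ∂μ) :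
    (⨅ (U : Ω → 𝕌) (V : Ω → Fin m → ℝ)
      (_ : MeasurableSpace.comap U inferInstance ≤ MeasurableSpace.comap W' inferInstance)
      (_ : MeasurableSpace.comap V inferInstance ≤
            MeasurableSpace.comap (fun ω => (W' ω, W'' ω)) inferInstance)
      (_ : Integrable V μ)
      (_ : μ[V | MeasurableSpace.comap W' inferInstance] =ᵐ[μ] 0),
      ∫⁻ ω, φ (Y ω, U ω, V ω, W'' ω) ∂μ)
    = ∫⁻ ω, ψ (Y ω) ∂μ := by
  have hψ' : ψ = pointwiseValue μ φ W'' := funext hψ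
  subst hψ'
  have hind := (IndepFun_iff_Indep W' W'' μ).mp hindep
  refine le_antisymm ?_ <| le_iInf fun U => le_iInf fun V => le_iInf fun hU => le_iInf fun hV =>
    le_iInf fun hVi => le_iInf fun hVce =>
      lintegral_pointwiseValue_le hφ hW' hW'' hind hfin' hY hU hV hVi hVce
  rcases isEmpty_or_nonempty 𝕌 with h𝕌 | h𝕌
  · have htop : ∀ y, pointwiseValue μ φ W'' y = ∞ := fun y => iInf_of_empty _
    simp [htop]
  refine ENNReal.le_of_forall_pos_le_add fun ε hε _ => ?_
  obtain ⟨U, V, hU, hV, hVi, hVce, hle⟩ :=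
    exists_lintegral_le_lintegral_pointwiseValue_add hφ hW' hW'' hind hfin' hY
      (ENNReal.coe_ne_zero.mpr hε.ne')
  refine le_trans ?_ hle
  exact iInf_le_of_le U <| iInf_le_of_le V <| iInf_le_of_le hU <| iInf_le_of_le hV <|
    iInf_le_of_le hVi <| iInf_le _ hVce

/-- **Interchange lemma.**
The optimal value of the minimization of `E[φ(Y, U, V, W'')]` over random variables `U`
with `σ(U) ⊆ σ(W')` and integrable `V` with `σ(V) ⊆ σ(W', W'')` and `E[V | σ(W')] = 0`
a.s. equals `E[ψ(Y)]`, where `ψ(y)` is the value of the corresponding "pointwise"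
problem. -/
theorem interchange_lemma {Ω : Type*} [MeasurableSpace Ω]
    (μ : Measure Ω) [IsProbabilityMeasure μ] {m : ℕ} (hm : 1 ≤ m)
    {𝕐 𝕌 𝕎' 𝕎'' : Type*} [MeasurableSpace 𝕐] [MeasurableSpace 𝕌]
    [MeasurableSpace 𝕎'] [MeasurableSpace 𝕎'']
    (φ : 𝕐 × 𝕌 × (Fin m → ℝ) × 𝕎'' → ℝ≥0∞) (hφ : Measurable φ)
    (W' : Ω → 𝕎') (W'' : Ω → 𝕎'')
    (hW' : Measurable W') (hW'' : Measurable W'')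
    (hindep : IndepFun W' W'' μ)
    (hfin' : (Set.range W').Finite) (hfin'' : (Set.range W'').Finite)
    (Y : Ω → 𝕐)
    (hY : MeasurableSpace.comap Y inferInstance ≤ MeasurableSpace.comap W' inferInstance)
    (ψ : 𝕐 → ℝ≥0∞)
    (hψ : ∀ y, ψ y =
      ⨅ (u : 𝕌) (V : Ω → Fin m → ℝ)
        (_ : MeasurableSpace.comap V inferInstance ≤ MeasurableSpace.comap W'' inferInstance)
        (_ : Integrable V μ) (_ : ∫ ω, V ω ∂μ = 0),
        ∫⁻ ω, φ (y, u, V ω, W'' ω) ∂μ) :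
    (⨅ (U : Ω → 𝕌) (V : Ω → Fin m → ℝ)
      (_ : MeasurableSpace.comap U inferInstance ≤ MeasurableSpace.comap W' inferInstance)
      (_ : MeasurableSpace.comap V inferInstance ≤
            MeasurableSpace.comap (fun ω => (W' ω, W'' ω)) inferInstance)
      (_ : Integrable V μ)
      (_ : μ[V | MeasurableSpace.comap W' inferInstance] =ᵐ[μ] 0),
      ∫⁻ ω, φ (Y ω, U ω, V ω, W'' ω) ∂μ)
    = ∫⁻ ω, ψ (Y ω) ∂μ :=
  interchange_lemma_general μ φ hφ W' W'' hW' hW'' hindep hfin' Y hY ψ hψ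
end

section
/- Suppose b = z_{t0}. Let (U, X) be an admissible pair for Problem (P) with initial time t0, initial state x_{t0} and level b. Define V_t = E[g(X_T) | ℱ_{t0:t+1}] − E[g(X_T) | ℱ_{t0:t}] for t = t0,…,T−1, and Z_{t0} = z_{t0}, Z_{t+1} = Z_t + V_t. Then g(X_T) is integrable, each V_t is well defined and integrable, and (U, V, X, Z) is an admissible quadruple for Problem (E) with initial time t0 and initial point (x_{t0}, z_{t0}), having the same cost as (U, X). -/
open MeasureTheory ProbabilityTheory
open scoped ENNReal BigOperators

section Setup

variable {Ω : Type*} [MeasurableSpace Ω] {T m : ℕ}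
  {𝕏 : ℕ → Type*} [∀ t, MeasurableSpace (𝕏 t)]
  {𝕌 : ℕ → Type*} [∀ t, MeasurableSpace (𝕌 t)]
  {𝕎 : ℕ → Type*} [∀ t, MeasurableSpace (𝕎 t)]

/-- The σ-field `ℱ_{t0:t} = σ(w_{t0+1}, …, w_t)` generated by the noise variables,
with `ℱ_{t0:t0}` the trivial σ-field. -/
def noiseFiltration (w : (t : ℕ) → Ω → 𝕎 t) (t0 t : ℕ) : MeasurableSpace Ω :=
  ⨆ s ∈ Set.Icc (t0 + 1) t, MeasurableSpace.comap (w s) inferInstance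

variable (μ : Measure Ω) (w : (t : ℕ) → Ω → 𝕎 t)
  (f : (t : ℕ) → 𝕏 t → 𝕌 t → 𝕎 (t + 1) → 𝕏 (t + 1))
  (L : (t : ℕ) → 𝕏 t → 𝕌 t → 𝕎 (t + 1) → ℝ≥0∞)
  (K : 𝕏 T → ℝ≥0∞) (g : 𝕏 T → Fin m → ℝ)

/-- Admissible pair `(U, X)` for Problem (P) with initial time `t0`, initial state `x0`
and constraint level `b`: initial condition, dynamics, nonanticipativity, and the final
expectation constraint `E[g(X_T)] ≤ b` (componentwise, `g(X_T)` being integrable). -/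
def AdmissibleP (t0 : ℕ) (x0 : 𝕏 t0) (b : Fin m → ℝ)
    (U : (t : ℕ) → Ω → 𝕌 t) (X : (t : ℕ) → Ω → 𝕏 t) : Prop :=
  (∀ ω, X t0 ω = x0) ∧
  (∀ t, t0 ≤ t → t < T → ∀ ω, X (t + 1) ω = f t (X t ω) (U t ω) (w (t + 1) ω)) ∧
  (∀ t, t0 ≤ t → t < T →
    MeasurableSpace.comap (U t) inferInstance ≤ noiseFiltration w t0 t) ∧
  Integrable (fun ω => g (X T ω)) μ ∧
  (∀ i, ∫ ω, g (X T ω) i ∂μ ≤ b i)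

/-- Cost of a pair `(U, X)` in Problem (P). -/
noncomputable def costP (t0 : ℕ) (U : (t : ℕ) → Ω → 𝕌 t) (X : (t : ℕ) → Ω → 𝕏 t) : ℝ≥0∞ :=
  ∫⁻ ω, (∑ t ∈ Finset.Ico t0 T, L t (X t ω) (U t ω) (w (t + 1) ω)) + K (X T ω) ∂μ

/-- Admissible quadruple `(U, V, X, Z)` for Problem (E) with initial time `t0` and
initial point `(x0, z0)`: dynamics and nonanticipativity for `(U, X)`, integrability,
nonanticipativity and the martingale-type constraint `E[V_t | ℱ_{t0:t}] = 0` for `V`,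
the dynamics `Z_{t+1} = Z_t + V_t`, and the a.s. final constraint `g(X_T) ≤ Z_T`. -/
def AdmissibleE (t0 : ℕ) (x0 : 𝕏 t0) (z0 : Fin m → ℝ)
    (U : (t : ℕ) → Ω → 𝕌 t) (V : ℕ → Ω → Fin m → ℝ)
    (X : (t : ℕ) → Ω → 𝕏 t) (Z : ℕ → Ω → Fin m → ℝ) : Prop :=
  (∀ ω, X t0 ω = x0) ∧
  (∀ t, t0 ≤ t → t < T → ∀ ω, X (t + 1) ω = f t (X t ω) (U t ω) (w (t + 1) ω)) ∧
  (∀ t, t0 ≤ t → t < T →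
    MeasurableSpace.comap (U t) inferInstance ≤ noiseFiltration w t0 t) ∧
  (∀ t, t0 ≤ t → t < T →
    Integrable (V t) μ ∧
    MeasurableSpace.comap (V t) inferInstance ≤ noiseFiltration w t0 (t + 1) ∧
    μ[V t | noiseFiltration w t0 t] =ᵐ[μ] 0) ∧
  (∀ ω, Z t0 ω = z0) ∧
  (∀ t, t0 ≤ t → t < T → ∀ ω, Z (t + 1) ω = Z t ω + V t ω) ∧
  (∀ᵐ ω ∂μ, ∀ i, g (X T ω) i ≤ Z T ω i)

/-- Cost of a quadruple `(U, V, X, Z)` in Problem (E) (the same expression as in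
Problem (P)). -/
noncomputable def costE (t0 : ℕ) (U : (t : ℕ) → Ω → 𝕌 t) (V : ℕ → Ω → Fin m → ℝ)
    (X : (t : ℕ) → Ω → 𝕏 t) (Z : ℕ → Ω → Fin m → ℝ) : ℝ≥0∞ :=
  ∫⁻ ω, (∑ t ∈ Finset.Ico t0 T, L t (X t ω) (U t ω) (w (t + 1) ω)) + K (X T ω) ∂μ

end Setup

/-!
The process `M_t = E[g(X_T) | ℱ_{t0:t}]` is a Doob martingale, and the `V_t` are its increments,
so `E[V_t | ℱ_{t0:t}] = 0` and `Z_t = z_{t0} + M_t - M_{t0}` by telescoping. At the endpoints,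
`ℱ_{t0:t0}` is trivial, so `M_{t0} = E[g(X_T)] ≤ z_{t0}`, and `X_T` is `ℱ_{t0:T}`-measurable
(the controls are nonanticipative and the dynamics measurable), so `M_T = g(X_T)`. Hence
`Z_T = z_{t0} + g(X_T) - E[g(X_T)] ≥ g(X_T)`.
-/

section NoiseFiltration

variable {Ω : Type*} {𝕎 : ℕ → Type*} [∀ t, MeasurableSpace (𝕎 t)] {w : (t : ℕ) → Ω → 𝕎 t}

theorem comap_le_noiseFiltration {t0 t s : ℕ} (hs : s ∈ Set.Icc (t0 + 1) t) :
    MeasurableSpace.comap (w s) inferInstance ≤ noiseFiltration w t0 t :=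
  le_iSup₂ (f := fun s (_ : s ∈ Set.Icc (t0 + 1) t) => MeasurableSpace.comap (w s) inferInstance)
    s hs

theorem noiseFiltration_mono (t0 : ℕ) : Monotone (noiseFiltration w t0) :=
  fun _ _ hst => iSup₂_le fun _ hs => comap_le_noiseFiltration ⟨hs.1, hs.2.trans hst⟩

theorem noiseFiltration_le [MeasurableSpace Ω] (hw : ∀ t, Measurable (w t)) (t0 t : ℕ) :
    noiseFiltration w t0 t ≤ ‹MeasurableSpace Ω› :=
  iSup₂_le fun s _ => (hw s).comap_le

theorem noiseFiltration_self (t0 : ℕ) : noiseFiltration w t0 t0 = ⊥ := by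
  simp [noiseFiltration]

theorem measurable_noiseFiltration {t0 t : ℕ} (ht : t0 < t) :
    Measurable[noiseFiltration w t0 t] (w t) :=
  measurable_iff_comap_le.mpr (comap_le_noiseFiltration ⟨ht, le_rfl⟩)

theorem measurable_state_noiseFiltration {𝕏 𝕌 : ℕ → Type*} [∀ t, MeasurableSpace (𝕏 t)]
    [∀ t, MeasurableSpace (𝕌 t)] {f : (t : ℕ) → 𝕏 t → 𝕌 t → 𝕎 (t + 1) → 𝕏 (t + 1)}
    (hf : ∀ t, Measurable fun p : 𝕏 t × 𝕌 t × 𝕎 (t + 1) => f t p.1 p.2.1 p.2.2)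
    {t0 T : ℕ} {x0 : 𝕏 t0} {U : (t : ℕ) → Ω → 𝕌 t} {X : (t : ℕ) → Ω → 𝕏 t}
    (hX0 : ∀ ω, X t0 ω = x0)
    (hX : ∀ t, t0 ≤ t → t < T → ∀ ω, X (t + 1) ω = f t (X t ω) (U t ω) (w (t + 1) ω))
    (hU : ∀ t, t0 ≤ t → t < T →
      MeasurableSpace.comap (U t) inferInstance ≤ noiseFiltration w t0 t)
    {t : ℕ} (ht0 : t0 ≤ t) (htT : t ≤ T) : Measurable[noiseFiltration w t0 t] (X t) := by
  induction t, ht0 using Nat.le_induction with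
  | base => simpa only [funext hX0] using measurable_const
  | succ t ht0 ih =>
    have hle := noiseFiltration_mono (w := w) t0 t.le_succ
    have hXt := (ih (by omega)).mono hle le_rfl
    have hUt := (measurable_iff_comap_le.mpr (hU t ht0 (by omega))).mono hle le_rfl
    rw [funext (hX t ht0 (by omega))]
    exact (hf t).comp (hXt.prodMk (hUt.prodMk (measurable_noiseFiltration (by omega))))

end NoiseFiltration

theorem condExp_condExp_sub_condExp_ae_eq_zero {α E : Type*} [NormedAddCommGroup E]
    [NormedSpace ℝ E] [CompleteSpace E] {m₁ m₂ m₀ : MeasurableSpace α} {μ : Measure α}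
    [IsFiniteMeasure μ] (hm₁₂ : m₁ ≤ m₂) (hm₂ : m₂ ≤ m₀) (f : α → E) :
    μ[μ[f | m₂] - μ[f | m₁] | m₁] =ᵐ[μ] 0 := by
  have hm₁ : m₁ ≤ m₀ := hm₁₂.trans hm₂
  have hself : μ[μ[f | m₁] | m₁] = μ[f | m₁] :=
    condExp_of_stronglyMeasurable hm₁ stronglyMeasurable_condExp integrable_condExp
  filter_upwards [condExp_sub (integrable_condExp (m := m₂) (f := f))
      (integrable_condExp (m := m₁) (f := f)) m₁,
    condExp_condExp_of_le (f := f) hm₁₂ hm₂] with x hsub htower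
  rw [hsub, Pi.sub_apply, htower, hself, Pi.zero_apply, sub_self]

theorem eq_add_sub_of_succ_eq_add_sub {α : Type*} [AddCommGroup α] {t0 T : ℕ} {z0 : α}
    {Z M : ℕ → α} (hZ0 : Z t0 = z0)
    (hZ : ∀ t, t0 ≤ t → t < T → Z (t + 1) = Z t + (M (t + 1) - M t))
    {t : ℕ} (ht0 : t0 ≤ t) (htT : t ≤ T) : Z t = z0 + M t - M t0 := by
  induction t, ht0 using Nat.le_induction with
  | base => rw [hZ0]; abel
  | succ t ht0 ih => rw [hZ t ht0 (by omega), ih (by omega)]; abel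

theorem admissibleP_to_admissibleE_general
    {Ω : Type*} [MeasurableSpace Ω] {T m : ℕ}
    {𝕏 : ℕ → Type*} [∀ t, MeasurableSpace (𝕏 t)]
    {𝕌 : ℕ → Type*} [∀ t, MeasurableSpace (𝕌 t)]
    {𝕎 : ℕ → Type*} [∀ t, MeasurableSpace (𝕎 t)]
    (μ : Measure Ω) [IsProbabilityMeasure μ]
    (w : (t : ℕ) → Ω → 𝕎 t) (hw : ∀ t, Measurable (w t))
    (f : (t : ℕ) → 𝕏 t → 𝕌 t → 𝕎 (t + 1) → 𝕏 (t + 1))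
    (hf : ∀ t, Measurable fun p : 𝕏 t × 𝕌 t × 𝕎 (t + 1) => f t p.1 p.2.1 p.2.2)
    (L : (t : ℕ) → 𝕏 t → 𝕌 t → 𝕎 (t + 1) → ℝ≥0∞)
    (K : 𝕏 T → ℝ≥0∞)
    (g : 𝕏 T → Fin m → ℝ) (hg : Measurable g)
    (t0 : ℕ) (ht0 : t0 ≤ T) (x0 : 𝕏 t0) (z0 : Fin m → ℝ)
    (U : (t : ℕ) → Ω → 𝕌 t) (X : (t : ℕ) → Ω → 𝕏 t)
    (hUX : AdmissibleP μ w f g t0 x0 z0 U X)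
    (V : ℕ → Ω → Fin m → ℝ)
    (hV : ∀ t, V t = fun ω =>
      (μ[fun ω' => g (X T ω') | noiseFiltration w t0 (t + 1)]) ω
        - (μ[fun ω' => g (X T ω') | noiseFiltration w t0 t]) ω)
    (Z : ℕ → Ω → Fin m → ℝ)
    (hZ0 : ∀ ω, Z t0 ω = z0)
    (hZ : ∀ t, t0 ≤ t → t < T → ∀ ω, Z (t + 1) ω = Z t ω + V t ω) :
    Integrable (fun ω => g (X T ω)) μ ∧
    (∀ t, t0 ≤ t → t < T → Integrable (V t) μ) ∧
    AdmissibleE μ w f g t0 x0 z0 U V X Z ∧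
    costE μ w L K t0 U V X Z = costP μ w L K t0 U X := by
  obtain ⟨hX0, hX, hU, hgX, hbound⟩ := hUX
  set G : Ω → Fin m → ℝ := fun ω => g (X T ω)
  have hVint : ∀ t, Integrable (V t) μ := fun t =>
    hV t ▸ integrable_condExp.sub integrable_condExp
  have hMT : μ[G | noiseFiltration w t0 T] = G :=
    condExp_of_stronglyMeasurable (noiseFiltration_le hw t0 T)
      (hg.comp (measurable_state_noiseFiltration hf hX0 hX hU ht0 le_rfl)).stronglyMeasurable hgX
  have hMt0 : μ[G | noiseFiltration w t0 t0] = fun _ => ∫ ω, G ω ∂μ := by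
    rw [noiseFiltration_self]
    exact condExp_bot G
  have hZT : ∀ ω, Z T ω = z0 + G ω - ∫ ω, G ω ∂μ := fun ω => by
    simpa only [hMT, hMt0] using eq_add_sub_of_succ_eq_add_sub (Z := fun t => Z t ω)
      (M := fun t => μ[G | noiseFiltration w t0 t] ω)
      (hZ0 ω) (fun t ht htT => by rw [hZ t ht htT ω, hV t]) ht0 le_rfl
  refine ⟨hgX, fun t _ _ => hVint t,
    ⟨hX0, hX, hU, fun t _ _ => ⟨hVint t, ?_, ?_⟩, hZ0, hZ, ?_⟩, rfl⟩
  · rw [← measurable_iff_comap_le, hV t]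
    exact (stronglyMeasurable_condExp.sub
      (stronglyMeasurable_condExp.mono (noiseFiltration_mono t0 t.le_succ))).measurable
  · rw [hV t]
    exact condExp_condExp_sub_condExp_ae_eq_zero (noiseFiltration_mono t0 t.le_succ)
      (noiseFiltration_le hw t0 _) G
  · refine .of_forall fun ω i => ?_
    rw [hZT ω, Pi.sub_apply, Pi.add_apply, eval_integral hgX.eval i]
    linarith [hbound i]

/-- **From Problem (P) to Problem (E) (first part of the equivalence).**
Suppose `b = z_{t0}` and `(U, X)` is admissible for Problem (P). Define
`V_t = E[g(X_T) | ℱ_{t0:t+1}] − E[g(X_T) | ℱ_{t0:t}]` and `Z_{t0} = z_{t0}`,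
`Z_{t+1} = Z_t + V_t`. Then `g(X_T)` is integrable, each `V_t` is well defined and
integrable, and `(U, V, X, Z)` is admissible for Problem (E) with the same cost. -/
theorem admissibleP_to_admissibleE
    {Ω : Type*} [MeasurableSpace Ω] {T m : ℕ}
    {𝕏 : ℕ → Type*} [∀ t, MeasurableSpace (𝕏 t)]
    {𝕌 : ℕ → Type*} [∀ t, MeasurableSpace (𝕌 t)]
    {𝕎 : ℕ → Type*} [∀ t, MeasurableSpace (𝕎 t)]
    (μ : Measure Ω) [IsProbabilityMeasure μ]
    (w : (t : ℕ) → Ω → 𝕎 t) (hw : ∀ t, Measurable (w t))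
    (f : (t : ℕ) → 𝕏 t → 𝕌 t → 𝕎 (t + 1) → 𝕏 (t + 1))
    (hf : ∀ t, Measurable fun p : 𝕏 t × 𝕌 t × 𝕎 (t + 1) => f t p.1 p.2.1 p.2.2)
    (L : (t : ℕ) → 𝕏 t → 𝕌 t → 𝕎 (t + 1) → ℝ≥0∞)
    (hL : ∀ t, Measurable fun p : 𝕏 t × 𝕌 t × 𝕎 (t + 1) => L t p.1 p.2.1 p.2.2)
    (K : 𝕏 T → ℝ≥0∞) (hK : Measurable K)
    (g : 𝕏 T → Fin m → ℝ) (hg : Measurable g) (hgpos : ∀ x i, 0 ≤ g x i)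
    (t0 : ℕ) (ht0 : t0 ≤ T) (x0 : 𝕏 t0) (z0 : Fin m → ℝ)
    (U : (t : ℕ) → Ω → 𝕌 t) (X : (t : ℕ) → Ω → 𝕏 t)
    (hUX : AdmissibleP μ w f g t0 x0 z0 U X)
    (V : ℕ → Ω → Fin m → ℝ)
    (hV : ∀ t, V t = fun ω =>
      (μ[fun ω' => g (X T ω') | noiseFiltration w t0 (t + 1)]) ω
        - (μ[fun ω' => g (X T ω') | noiseFiltration w t0 t]) ω)
    (Z : ℕ → Ω → Fin m → ℝ)
    (hZ0 : ∀ ω, Z t0 ω = z0)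
    (hZ : ∀ t, t0 ≤ t → t < T → ∀ ω, Z (t + 1) ω = Z t ω + V t ω) :
    Integrable (fun ω => g (X T ω)) μ ∧
    (∀ t, t0 ≤ t → t < T → Integrable (V t) μ) ∧
    AdmissibleE μ w f g t0 x0 z0 U V X Z ∧
    costE μ w L K t0 U V X Z = costP μ w L K t0 U X :=
  admissibleP_to_admissibleE_general μ w hw f hf L K g hg t0 ht0 x0 z0 U X hUX V hV Z hZ0 hZ
end

section
/- Let (U, V, X, Z) be an admissible quadruple for Problem (E) with initial time t0 and initial point (x_{t0}, z_{t0}). Then E[Z_T] = z_{t0}, g(X_T) is integrable with E[g(X_T)] ≤ z_{t0} componentwise, and consequently (U, X) is an admissible pair for Problem (P) with initial time t0, initial state x_{t0} and level b = z_{t0}, with the same cost. -/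
open MeasureTheory ProbabilityTheory
open scoped ENNReal BigOperators

/-- **From Problem (E) to Problem (P) (second part of the equivalence).**
If `(U, V, X, Z)` is admissible for Problem (E) with initial point `(x_{t0}, z_{t0})`,
then `E[Z_T] = z_{t0}`, `g(X_T)` is integrable with `E[g(X_T)] ≤ z_{t0}` componentwise,
and `(U, X)` is admissible for Problem (P) with level `b = z_{t0}`, with the same
cost. -/
theorem admissibleE_to_admissibleP
    {Ω : Type*} [MeasurableSpace Ω] {T m : ℕ}
    {𝕏 : ℕ → Type*} [∀ t, MeasurableSpace (𝕏 t)]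
    {𝕌 : ℕ → Type*} [∀ t, MeasurableSpace (𝕌 t)]
    {𝕎 : ℕ → Type*} [∀ t, MeasurableSpace (𝕎 t)]
    (μ : Measure Ω) [IsProbabilityMeasure μ]
    (w : (t : ℕ) → Ω → 𝕎 t) (hw : ∀ t, Measurable (w t))
    (f : (t : ℕ) → 𝕏 t → 𝕌 t → 𝕎 (t + 1) → 𝕏 (t + 1))
    (hf : ∀ t, Measurable fun p : 𝕏 t × 𝕌 t × 𝕎 (t + 1) => f t p.1 p.2.1 p.2.2)
    (L : (t : ℕ) → 𝕏 t → 𝕌 t → 𝕎 (t + 1) → ℝ≥0∞)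
    (hL : ∀ t, Measurable fun p : 𝕏 t × 𝕌 t × 𝕎 (t + 1) => L t p.1 p.2.1 p.2.2)
    (K : 𝕏 T → ℝ≥0∞) (hK : Measurable K)
    (g : 𝕏 T → Fin m → ℝ) (hg : Measurable g) (hgpos : ∀ x i, 0 ≤ g x i)
    (t0 : ℕ) (ht0 : t0 ≤ T) (x0 : 𝕏 t0) (z0 : Fin m → ℝ)
    (U : (t : ℕ) → Ω → 𝕌 t) (V : ℕ → Ω → Fin m → ℝ)
    (X : (t : ℕ) → Ω → 𝕏 t) (Z : ℕ → Ω → Fin m → ℝ)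
    (hUVXZ : AdmissibleE μ w f g t0 x0 z0 U V X Z) :
    (∫ ω, Z T ω ∂μ = z0) ∧
    Integrable (fun ω => g (X T ω)) μ ∧
    (∀ i, ∫ ω, g (X T ω) i ∂μ ≤ z0 i) ∧
    AdmissibleP μ w f g t0 x0 z0 U X ∧
    costP μ w L K t0 U X = costE μ w L K t0 U V X Z := by
  obtain ⟨hX0, hXdyn, hUad, hV, hZ0, hZdyn, hfinal⟩ := hUVXZ
  -- ambient bound on the noise filtration
  have hle : ∀ t s : ℕ, noiseFiltration w t s ≤ ‹MeasurableSpace Ω› := fun t s =>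
    iSup₂_le fun r _ => measurable_iff_comap_le.mp (hw r)
  -- U is measurable
  have hUmeas : ∀ t, t0 ≤ t → t < T → Measurable (U t) := fun t h1 h2 =>
    measurable_iff_comap_le.mpr ((hUad t h1 h2).trans (hle t0 t))
  -- X is measurable
  have hXmeas : ∀ t, t0 ≤ t → t ≤ T → Measurable (X t) := by
    intro t ht
    induction t, ht using Nat.le_induction with
    | base => intro _; have : X t0 = fun _ => x0 := funext hX0; rw [this]; exact measurable_const
    | succ t ht ih =>
      intro hlt
      have htT : t < T := Nat.lt_of_succ_le hlt
      have : X (t + 1) = fun ω => f t (X t ω) (U t ω) (w (t + 1) ω) :=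
        funext (hXdyn t ht htT)
      rw [this]
      exact (hf t).comp ((ih htT.le).prodMk ((hUmeas t ht htT).prodMk (hw (t + 1))))
  -- Representation of Z
  have hZrep : ∀ t, t0 ≤ t → t ≤ T →
      ∀ ω, Z t ω = z0 + ∑ s ∈ Finset.Ico t0 t, V s ω := by
    intro t ht
    induction t, ht using Nat.le_induction with
    | base => intro _ ω; simp [hZ0 ω]
    | succ t ht ih =>
      intro hlt ω
      have htT : t < T := Nat.lt_of_succ_le hlt
      rw [hZdyn t ht htT ω, ih htT.le ω, Finset.sum_Ico_succ_top ht, add_assoc]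
  have hZT : ∀ ω, Z T ω = z0 + ∑ s ∈ Finset.Ico t0 T, V s ω := hZrep T ht0 le_rfl
  -- Integrability of Z T
  have hVint : ∀ s ∈ Finset.Ico t0 T, Integrable (V s) μ := by
    intro s hs
    rw [Finset.mem_Ico] at hs
    exact (hV s hs.1 hs.2).1
  have hZTint : Integrable (Z T) μ := by
    have : Z T = fun ω => z0 + ∑ s ∈ Finset.Ico t0 T, V s ω := funext hZT
    rw [this]
    exact (integrable_const z0).add (integrable_finset_sum _ hVint)
  -- Expectation of each V vanishes
  have hVzero : ∀ s ∈ Finset.Ico t0 T, ∫ ω, V s ω ∂μ = 0 := by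
    intro s hs
    rw [Finset.mem_Ico] at hs
    obtain ⟨-, -, hce⟩ := hV s hs.1 hs.2
    calc ∫ ω, V s ω ∂μ = ∫ ω, (μ[V s | noiseFiltration w t0 s]) ω ∂μ :=
          (integral_condExp (hle t0 s)).symm
      _ = ∫ ω, (0 : Ω → Fin m → ℝ) ω ∂μ := integral_congr_ae hce
      _ = 0 := by simp
  -- E[Z T] = z0
  have hEZT : ∫ ω, Z T ω ∂μ = z0 := by
    have : Z T = fun ω => z0 + ∑ s ∈ Finset.Ico t0 T, V s ω := funext hZT
    rw [this, integral_add (integrable_const z0) (integrable_finset_sum _ hVint),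
      integral_const, integral_finset_sum _ hVint]
    simp [hVzero, Finset.sum_congr rfl hVzero]
  -- componentwise expectation of Z T
  have hZi : ∀ i, ∫ ω, Z T ω i ∂μ = z0 i := by
    intro i
    have := (ContinuousLinearMap.proj (R := ℝ) (φ := fun _ : Fin m => ℝ) i).integral_comp_comm
      hZTint
    simpa [hEZT] using this
  -- measurability of g ∘ X T
  have hgXmeas : Measurable fun ω => g (X T ω) := hg.comp (hXmeas T ht0 le_rfl)
  -- Integrability of g (X T ·)
  have hgXint : Integrable (fun ω => g (X T ω)) μ := by
    refine Integrable.mono hZTint hgXmeas.aestronglyMeasurable ?_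
    filter_upwards [hfinal] with ω hω
    refine (pi_norm_le_iff_of_nonneg (norm_nonneg _)).mpr fun i => ?_
    calc ‖g (X T ω) i‖ = g (X T ω) i := Real.norm_of_nonneg (hgpos _ i)
      _ ≤ Z T ω i := hω i
      _ ≤ ‖Z T ω i‖ := le_abs_self _
      _ ≤ ‖Z T ω‖ := norm_le_pi_norm _ i
  -- componentwise expectation bound
  have hgXi : ∀ i, ∫ ω, g (X T ω) i ∂μ ≤ z0 i := by
    intro i
    calc ∫ ω, g (X T ω) i ∂μ ≤ ∫ ω, Z T ω i ∂μ := by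
          refine integral_mono_ae
            ((ContinuousLinearMap.proj (R := ℝ) (φ := fun _ : Fin m => ℝ) i).integrable_comp
              hgXint)
            ((ContinuousLinearMap.proj (R := ℝ) (φ := fun _ : Fin m => ℝ) i).integrable_comp
              hZTint) ?_
          filter_upwards [hfinal] with ω hω using hω i
      _ = z0 i := hZi i
  exact ⟨hEZT, hgXint, hgXi, ⟨hX0, hXdyn, hUad, hgXint, hgXi⟩, rfl⟩
end

section
/- Assume the noise variables w_1,…,w_T are independent and each takes only finitely many values, assume each value function V_t is measurable, and suppose that for each t = 0,…,T−1 there is a measurable feedback φ*_t : 𝕏_t → 𝕌_t such that φ*_t(x) attains the infimum defining V_t(x) for every x ∈ 𝕏_t. Then for every t ∈ {0,…,T−1} and every x ∈ 𝕏_t: J_t(x, φ*_t,…,φ*_{T−1}) = V_t(x), and V_t(x) ≤ J_t(x, φ_t,…,φ_{T−1}) for every choice of measurable feedbacks φ_s : 𝕏_s → 𝕌_s (s = t,…,T−1). In other words, the truncated feedback sequence (φ*_t,…,φ*_{T−1}) is optimal for the feedback problem starting at time t for every initial state x ∈ 𝕏_t. -/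
/-!
Backward induction on `t`. The pathwise cost from time `t + 1` on is a measurable function
of the state at time `t + 1` and of the later noises, which are independent of `w (t + 1)`;
hence the expected cost from time `t` is the expected first-stage cost plus the expected
cost-to-go from the random next state. Along `φ*` the induction hypothesis turns this into
the right-hand side of the Bellman equation, which is `V t x`; along any other feedback `φ`
it bounds from above the Bellman expression at the control `φ t x`, which is at least `V t x`.
-/

open MeasureTheory ProbabilityTheory
open scoped ENNReal BigOperators

section Setup

variable {Ω : Type*} [MeasurableSpace Ω] {T : ℕ}
  {𝕏 : ℕ → Type*} [∀ t, MeasurableSpace (𝕏 t)]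
  {𝕌 : ℕ → Type*} [∀ t, MeasurableSpace (𝕌 t)]
  {𝕎 : ℕ → Type*} [∀ t, MeasurableSpace (𝕎 t)]

/-- Pathwise cumulated cost of the closed-loop system driven by the feedbacks `φ`
starting from state `x` at time `t`:
`∑_{s=t}^{T−1} L_s(X_s, φ_s(X_s), w_{s+1}) + K(X_T)` where `X_t = x` and
`X_{s+1} = f_s(X_s, φ_s(X_s), w_{s+1})`. The feedback cost `J_t(x, φ_t, …, φ_{T−1})`
is its expectation. -/
noncomputable def feedbackCost (T : ℕ) (w : (t : ℕ) → Ω → 𝕎 t)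
    (f : (t : ℕ) → 𝕏 t → 𝕌 t → 𝕎 (t + 1) → 𝕏 (t + 1))
    (L : (t : ℕ) → 𝕏 t → 𝕌 t → 𝕎 (t + 1) → ℝ≥0∞)
    (K : 𝕏 T → ℝ≥0∞) (φ : (s : ℕ) → 𝕏 s → 𝕌 s)
    (t : ℕ) (x : 𝕏 t) (ω : Ω) : ℝ≥0∞ :=
  if h : t < T then
    L t x (φ t x) (w (t + 1) ω)
      + feedbackCost T w f L K φ (t + 1) (f t x (φ t x) (w (t + 1) ω)) ω
  else if h' : t = T then K (h' ▸ x) else 0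
  termination_by T - t
  decreasing_by omega

end Setup

open Finset

namespace ProbabilityTheory

variable {Ω α β : Type*} [MeasurableSpace Ω] [MeasurableSpace α] [MeasurableSpace β]
  {μ : Measure Ω}

lemma iIndepFun.indepFun_finset_of_notMem {ι : Type*} {κ : ι → Type*}
    [∀ i, MeasurableSpace (κ i)] {X : (i : ι) → Ω → κ i} (hX_indep : iIndepFun X μ)
    (hX : ∀ i, Measurable (X i)) {S : Finset ι} {i : ι} (hi : i ∉ S) :
    IndepFun (X i) (fun ω (j : S) => X j ω) μ :=
  (hX_indep.indepFun_finset {i} S (disjoint_singleton_left.mpr hi) hX).comp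
    (measurable_pi_apply (⟨i, mem_singleton_self i⟩ : ({i} : Finset ι))) measurable_id

lemma IndepFun.lintegral_comp_eq_lintegral_lintegral [IsFiniteMeasure μ] {X : Ω → α} {Y : Ω → β}
    (hXY : IndepFun X Y μ) (hX : Measurable X) (hY : Measurable Y) {F : α × β → ℝ≥0∞}
    (hF : Measurable F) :
    ∫⁻ ω, F (X ω, Y ω) ∂μ = ∫⁻ ω, ∫⁻ ω', F (X ω, Y ω') ∂μ ∂μ := by
  have hmap : μ.map (fun ω => (X ω, Y ω)) = (μ.map X).prod (μ.map Y) :=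
    (indepFun_iff_map_prod_eq_prod_map_map hX.aemeasurable hY.aemeasurable).mp hXY
  calc ∫⁻ ω, F (X ω, Y ω) ∂μ = ∫⁻ p, F p ∂((μ.map X).prod (μ.map Y)) := by
        rw [← hmap, lintegral_map hF (hX.prodMk hY)]
    _ = ∫⁻ a, ∫⁻ b, F (a, b) ∂(μ.map Y) ∂(μ.map X) := lintegral_prod F hF.aemeasurable
    _ = ∫⁻ ω, ∫⁻ ω', F (X ω, Y ω') ∂μ ∂μ := by
        rw [lintegral_map hF.lintegral_prod_right' hX]
        exact lintegral_congr fun ω => lintegral_map (hF.comp measurable_prodMk_left) hY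

end ProbabilityTheory

section FeedbackCost

variable {Ω : Type*} {T : ℕ} {𝕏 𝕌 𝕎 : ℕ → Type*}
  {w : (t : ℕ) → Ω → 𝕎 t}
  {f : (t : ℕ) → 𝕏 t → 𝕌 t → 𝕎 (t + 1) → 𝕏 (t + 1)}
  {L : (t : ℕ) → 𝕏 t → 𝕌 t → 𝕎 (t + 1) → ℝ≥0∞}
  {K : 𝕏 T → ℝ≥0∞} {φ : (s : ℕ) → 𝕏 s → 𝕌 s}

lemma feedbackCost_of_lt {t : ℕ} (ht : t < T) (x : 𝕏 t) (ω : Ω) :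
    feedbackCost T w f L K φ t x ω
      = L t x (φ t x) (w (t + 1) ω)
        + feedbackCost T w f L K φ (t + 1) (f t x (φ t x) (w (t + 1) ω)) ω := by
  rw [feedbackCost, dif_pos ht]

lemma feedbackCost_self (x : 𝕏 T) (ω : Ω) : feedbackCost T w f L K φ T x ω = K x := by
  rw [feedbackCost, dif_neg (lt_irrefl T), dif_pos rfl]

lemma lintegral_feedbackCost_self [MeasurableSpace Ω] (μ : Measure Ω) [IsProbabilityMeasure μ]
    (x : 𝕏 T) :
    ∫⁻ ω, feedbackCost T w f L K φ T x ω ∂μ = K x := by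
  simp_rw [feedbackCost_self, lintegral_const, measure_univ, mul_one]

variable (T) in
/-- The index `i : Fin T` stands for the noise `w (i + 1)`, so these are the noises
`w (t + 1), …, w T` that drive the system from time `t` on. -/
def noiseIndicesFrom (t : ℕ) : Finset (Fin T) := {i | t ≤ (i : ℕ)}

@[simp]
lemma mem_noiseIndicesFrom {t : ℕ} {i : Fin T} : i ∈ noiseIndicesFrom T t ↔ t ≤ i :=
  mem_filter_univ i

variable [∀ t, MeasurableSpace (𝕏 t)] [∀ t, MeasurableSpace (𝕌 t)] [∀ t, MeasurableSpace (𝕎 t)]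

lemma exists_measurable_feedbackCost_eq
    (hf : ∀ t, Measurable fun p : 𝕏 t × 𝕌 t × 𝕎 (t + 1) => f t p.1 p.2.1 p.2.2)
    (hL : ∀ t, Measurable fun p : 𝕏 t × 𝕌 t × 𝕎 (t + 1) => L t p.1 p.2.1 p.2.2)
    (hK : Measurable K) (hφ : ∀ s, Measurable (φ s)) {t : ℕ} (ht : t ≤ T) :
    ∃ g : 𝕏 t × ((i : noiseIndicesFrom T t) → 𝕎 (i.1.1 + 1)) → ℝ≥0∞, Measurable g ∧
      ∀ x ω, feedbackCost T w f L K φ t x ω = g (x, fun i => w (i.1.1 + 1) ω) := by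
  induction ht using Nat.decreasingInduction with
  | self => exact ⟨fun p => K p.1, hK.comp measurable_fst, feedbackCost_self⟩
  | of_succ t ht ih =>
    obtain ⟨g, hg, hcost⟩ := ih
    let now : noiseIndicesFrom T t := ⟨⟨t, ht⟩, by simp⟩
    let later (i : noiseIndicesFrom T (t + 1)) : noiseIndicesFrom T t :=
      ⟨i, mem_noiseIndicesFrom.mpr (Nat.le_of_succ_le (mem_noiseIndicesFrom.mp i.2))⟩
    have hstep : Measurable fun p : 𝕏 t × ((i : noiseIndicesFrom T t) → 𝕎 (i.1.1 + 1)) =>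
        (p.1, φ t p.1, p.2 now) :=
      measurable_fst.prodMk (((hφ t).comp measurable_fst).prodMk
        ((measurable_pi_apply now).comp measurable_snd))
    refine ⟨fun p => L t p.1 (φ t p.1) (p.2 now)
        + g (f t p.1 (φ t p.1) (p.2 now), fun i => p.2 (later i)), ?_, ?_⟩
    · exact ((hL t).comp hstep).add (hg.comp (((hf t).comp hstep).prodMk
        (measurable_pi_lambda _ fun i => (measurable_pi_apply (later i)).comp measurable_snd)))
    · intro x ω
      rw [feedbackCost_of_lt ht, hcost]

variable [MeasurableSpace Ω] (μ : Measure Ω) [IsProbabilityMeasure μ]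

/-- The cost from time `t + 1` on depends only on `w (t + 2), …, w T`, which are
independent of `w (t + 1)`. -/
lemma lintegral_feedbackCost_of_lt
    (hw : ∀ t, Measurable (w t)) (hindep : iIndepFun (fun t : Fin T => w (t.1 + 1)) μ)
    (hf : ∀ t, Measurable fun p : 𝕏 t × 𝕌 t × 𝕎 (t + 1) => f t p.1 p.2.1 p.2.2)
    (hL : ∀ t, Measurable fun p : 𝕏 t × 𝕌 t × 𝕎 (t + 1) => L t p.1 p.2.1 p.2.2)
    (hK : Measurable K) (hφ : ∀ s, Measurable (φ s)) {t : ℕ} (ht : t < T) (x : 𝕏 t) :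
    ∫⁻ ω, feedbackCost T w f L K φ t x ω ∂μ
      = ∫⁻ ω, L t x (φ t x) (w (t + 1) ω)
          + ∫⁻ ω', feedbackCost T w f L K φ (t + 1) (f t x (φ t x) (w (t + 1) ω)) ω' ∂μ ∂μ := by
  obtain ⟨g, hg, hcost⟩ := exists_measurable_feedbackCost_eq (w := w) hf hL hK hφ ht
  have hind : IndepFun (w (t + 1)) (fun ω (i : noiseIndicesFrom T (t + 1)) => w (i.1.1 + 1) ω) μ :=
    hindep.indepFun_finset_of_notMem (fun i => hw _) (i := ⟨t, ht⟩) (by simp)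
  have hnow : Measurable fun a : 𝕎 (t + 1) => (x, φ t x, a) := by fun_prop
  have hF : Measurable fun p : 𝕎 (t + 1) × ((i : noiseIndicesFrom T (t + 1)) → 𝕎 (i.1.1 + 1)) =>
      L t x (φ t x) p.1 + g (f t x (φ t x) p.1, p.2) :=
    (((hL t).comp hnow).comp measurable_fst).add
      (hg.comp ((((hf t).comp hnow).comp measurable_fst).prodMk measurable_snd))
  simp_rw [feedbackCost_of_lt ht, hcost]
  refine (hind.lintegral_comp_eq_lintegral_lintegral (hw _)
    (measurable_pi_lambda _ fun i => hw _) hF).trans (lintegral_congr fun ω => ?_)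
  dsimp only
  rw [lintegral_add_left measurable_const, lintegral_const, measure_univ, mul_one]

lemma le_lintegral_feedbackCost
    (hw : ∀ t, Measurable (w t)) (hindep : iIndepFun (fun t : Fin T => w (t.1 + 1)) μ)
    (hf : ∀ t, Measurable fun p : 𝕏 t × 𝕌 t × 𝕎 (t + 1) => f t p.1 p.2.1 p.2.2)
    (hL : ∀ t, Measurable fun p : 𝕏 t × 𝕌 t × 𝕎 (t + 1) => L t p.1 p.2.1 p.2.2)
    (hK : Measurable K) (hφ : ∀ s, Measurable (φ s)) {V : (t : ℕ) → 𝕏 t → ℝ≥0∞}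
    (hVT : ∀ x, V T x ≤ K x)
    (hV : ∀ t < T, ∀ x u,
      V t x ≤ ∫⁻ ω, L t x u (w (t + 1) ω) + V (t + 1) (f t x u (w (t + 1) ω)) ∂μ)
    {t : ℕ} (ht : t ≤ T) (x : 𝕏 t) :
    V t x ≤ ∫⁻ ω, feedbackCost T w f L K φ t x ω ∂μ := by
  induction ht using Nat.decreasingInduction with
  | self => rw [lintegral_feedbackCost_self μ]; exact hVT x
  | of_succ t ht ih =>
    rw [lintegral_feedbackCost_of_lt μ hw hindep hf hL hK hφ ht]
    exact (hV t ht x (φ t x)).trans (lintegral_mono fun ω => add_le_add_right (ih _) _)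

lemma lintegral_feedbackCost_eq
    (hw : ∀ t, Measurable (w t)) (hindep : iIndepFun (fun t : Fin T => w (t.1 + 1)) μ)
    (hf : ∀ t, Measurable fun p : 𝕏 t × 𝕌 t × 𝕎 (t + 1) => f t p.1 p.2.1 p.2.2)
    (hL : ∀ t, Measurable fun p : 𝕏 t × 𝕌 t × 𝕎 (t + 1) => L t p.1 p.2.1 p.2.2)
    (hK : Measurable K) (hφ : ∀ s, Measurable (φ s)) {V : (t : ℕ) → 𝕏 t → ℝ≥0∞}
    (hVT : ∀ x, V T x = K x)
    (hV : ∀ t < T, ∀ x, V t x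
      = ∫⁻ ω, L t x (φ t x) (w (t + 1) ω) + V (t + 1) (f t x (φ t x) (w (t + 1) ω)) ∂μ)
    {t : ℕ} (ht : t ≤ T) (x : 𝕏 t) :
    ∫⁻ ω, feedbackCost T w f L K φ t x ω ∂μ = V t x := by
  induction ht using Nat.decreasingInduction with
  | self => rw [lintegral_feedbackCost_self μ, hVT]
  | of_succ t ht ih =>
    simp_rw [lintegral_feedbackCost_of_lt μ hw hindep hf hL hK hφ ht, ih, hV t ht x]

end FeedbackCost

theorem classical_dp_time_consistency_general
    {Ω : Type*} [MeasurableSpace Ω] {T : ℕ}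
    {𝕏 : ℕ → Type*} [∀ t, MeasurableSpace (𝕏 t)]
    {𝕌 : ℕ → Type*} [∀ t, MeasurableSpace (𝕌 t)]
    {𝕎 : ℕ → Type*} [∀ t, MeasurableSpace (𝕎 t)]
    (μ : Measure Ω) [IsProbabilityMeasure μ]
    (w : (t : ℕ) → Ω → 𝕎 t) (hw : ∀ t, Measurable (w t))
    (hindep : iIndepFun
      (fun t : Fin T => w (t.1 + 1)) μ)
    (f : (t : ℕ) → 𝕏 t → 𝕌 t → 𝕎 (t + 1) → 𝕏 (t + 1))
    (hf : ∀ t, Measurable fun p : 𝕏 t × 𝕌 t × 𝕎 (t + 1) => f t p.1 p.2.1 p.2.2)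
    (L : (t : ℕ) → 𝕏 t → 𝕌 t → 𝕎 (t + 1) → ℝ≥0∞)
    (hL : ∀ t, Measurable fun p : 𝕏 t × 𝕌 t × 𝕎 (t + 1) => L t p.1 p.2.1 p.2.2)
    (K : 𝕏 T → ℝ≥0∞) (hK : Measurable K)
    -- the value functions, given by the dynamic programming equation
    (V : (t : ℕ) → 𝕏 t → ℝ≥0∞)
    (hVT : ∀ x : 𝕏 T, V T x = K x)
    (hVrec : ∀ t, t < T → ∀ x : 𝕏 t,
      V t x = ⨅ u : 𝕌 t,
        ∫⁻ ω, L t x u (w (t + 1) ω) + V (t + 1) (f t x u (w (t + 1) ω)) ∂μ)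
    -- the optimal feedbacks, attaining the infimum everywhere
    (φstar : (s : ℕ) → 𝕏 s → 𝕌 s) (hφstar_meas : ∀ s, Measurable (φstar s))
    (hφstar : ∀ t, t < T → ∀ x : 𝕏 t,
      V t x = ∫⁻ ω, L t x (φstar t x) (w (t + 1) ω)
        + V (t + 1) (f t x (φstar t x) (w (t + 1) ω)) ∂μ) :
    ∀ t, t < T → ∀ x : 𝕏 t,
      (∫⁻ ω, feedbackCost T w f L K φstar t x ω ∂μ = V t x) ∧
      ∀ φ : (s : ℕ) → 𝕏 s → 𝕌 s, (∀ s, Measurable (φ s)) →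
        V t x ≤ ∫⁻ ω, feedbackCost T w f L K φ t x ω ∂μ := by
  intro t ht x
  refine ⟨lintegral_feedbackCost_eq μ hw hindep hf hL hK hφstar_meas hVT hφstar ht.le x,
    fun φ hφ => le_lintegral_feedbackCost μ hw hindep hf hL hK hφ (fun y => (hVT y).le)
      (fun s hs y u => (hVrec s hs y).trans_le (iInf_le _ u)) ht.le x⟩

/-- **Time consistency of dynamic programming for the classical problem.**
If `(φ*_t)` are measurable feedbacks attaining, for every state, the infimum in the
dynamic programming equation for the value functions `(V_t)`, then for every time `t`
and every initial state `x`, the truncated sequence `(φ*_t, …, φ*_{T−1})` achieves the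
value `V_t(x)`, which is a lower bound of the cost of any measurable feedback
sequence: `(φ*_t, …, φ*_{T−1})` is a universal solution at time `t`. -/
theorem classical_dp_time_consistency
    {Ω : Type*} [MeasurableSpace Ω] {T : ℕ}
    {𝕏 : ℕ → Type*} [∀ t, MeasurableSpace (𝕏 t)]
    {𝕌 : ℕ → Type*} [∀ t, MeasurableSpace (𝕌 t)]
    {𝕎 : ℕ → Type*} [∀ t, MeasurableSpace (𝕎 t)]
    (μ : Measure Ω) [IsProbabilityMeasure μ]
    (w : (t : ℕ) → Ω → 𝕎 t) (hw : ∀ t, Measurable (w t))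
    (hindep : iIndepFun
      (fun t : Fin T => w (t.1 + 1)) μ)
    (hfin : ∀ t, 1 ≤ t → t ≤ T → (Set.range (w t)).Finite)
    (f : (t : ℕ) → 𝕏 t → 𝕌 t → 𝕎 (t + 1) → 𝕏 (t + 1))
    (hf : ∀ t, Measurable fun p : 𝕏 t × 𝕌 t × 𝕎 (t + 1) => f t p.1 p.2.1 p.2.2)
    (L : (t : ℕ) → 𝕏 t → 𝕌 t → 𝕎 (t + 1) → ℝ≥0∞)
    (hL : ∀ t, Measurable fun p : 𝕏 t × 𝕌 t × 𝕎 (t + 1) => L t p.1 p.2.1 p.2.2)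
    (K : 𝕏 T → ℝ≥0∞) (hK : Measurable K)
    -- the value functions, given by the dynamic programming equation
    (V : (t : ℕ) → 𝕏 t → ℝ≥0∞)
    (hVmeas : ∀ t, Measurable (V t))
    (hVT : ∀ x : 𝕏 T, V T x = K x)
    (hVrec : ∀ t, t < T → ∀ x : 𝕏 t,
      V t x = ⨅ u : 𝕌 t,
        ∫⁻ ω, L t x u (w (t + 1) ω) + V (t + 1) (f t x u (w (t + 1) ω)) ∂μ)
    -- the optimal feedbacks, attaining the infimum everywhere
    (φstar : (s : ℕ) → 𝕏 s → 𝕌 s) (hφstar_meas : ∀ s, Measurable (φstar s))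
    (hφstar : ∀ t, t < T → ∀ x : 𝕏 t,
      V t x = ∫⁻ ω, L t x (φstar t x) (w (t + 1) ω)
        + V (t + 1) (f t x (φstar t x) (w (t + 1) ω)) ∂μ) :
    ∀ t, t < T → ∀ x : 𝕏 t,
      (∫⁻ ω, feedbackCost T w f L K φstar t x ω ∂μ = V t x) ∧
      ∀ φ : (s : ℕ) → 𝕏 s → 𝕌 s, (∀ s, Measurable (φ s)) →
        V t x ≤ ∫⁻ ω, feedbackCost T w f L K φ t x ω ∂μ :=
  classical_dp_time_consistency_general μ w hw hindep f hf L hL K hK V hVT hVrec φstar hφstar_meas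
    hφstar
end
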